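/- The restriction of u to R_𝐝 maps distinct monomials of multidegree 𝐝 to distinct monomials of S; more precisely, if m and m' are monomials of R that are multihomogeneous of multidegree 𝐝 and u(m) = u(m'), then m = m'. -/
import Mathlib


open MvPolynomial

/-- Variables of `R`: `x_{i,j}` for `j : Fin s`, `i : Fin (n j + 1)` (index `0` is `x_{0,j}`). -/
abbrev RVar (s : ℕ) (n : Fin s → ℕ) := Σ j : Fin s, Fin (n j + 1)

/-- Variables of `S`: `none` is `z_0`, `some ⟨j,i⟩` is `z_{i+1,j}`. -/
abbrev SVar (s : ℕ) (n : Fin s → ℕ) := Option (Σ j : Fin s, Fin (n j))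

/-- `f` is multihomogeneous of multidegree `d`. -/
def MultiHomog {K : Type*} [CommSemiring K] {s : ℕ} {n : Fin s → ℕ} (d : Fin s → ℕ)
    (f : MvPolynomial (RVar s n) K) : Prop :=
  ∀ m ∈ f.support, ∀ j : Fin s, ∑ i : Fin (n j + 1), m ⟨j, i⟩ = d j

/-- The substitution `u : R → S`, `x_{0,j} ↦ z_0`, `x_{i,j} ↦ z_{i,j}` for `i ≥ 1`. -/
noncomputable def subst (K : Type*) [CommSemiring K] (s : ℕ) (n : Fin s → ℕ) :
    MvPolynomial (RVar s n) K →ₐ[K] MvPolynomial (SVar s n) K :=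
  aeval fun v => if h : (v.2 : ℕ) = 0 then X none
    else X (some ⟨v.1, ⟨(v.2 : ℕ) - 1, by have := v.2.isLt; omega⟩⟩)


def gmap (s : ℕ) (n : Fin s → ℕ) : RVar s n → SVar s n :=
  fun v => if h : (v.2 : ℕ) = 0 then none
    else some ⟨v.1, ⟨(v.2 : ℕ) - 1, by have := v.2.isLt; omega⟩⟩

lemma subst_eq_rename (K : Type*) [CommSemiring K] (s : ℕ) (n : Fin s → ℕ) :
    subst K s n = rename (gmap s n) := by
  apply algHom_ext
  intro v
  rw [subst, aeval_X, rename_X, gmap]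
  split <;> rfl

lemma gmap_some {s : ℕ} {n : Fin s → ℕ} (j' : Fin s) (i' : Fin (n j' + 1))
    (j : Fin s) (i : Fin (n j)) :
    gmap s n ⟨j', i'⟩ = some ⟨j, i⟩ ↔ (⟨j', i'⟩ : RVar s n) = ⟨j, i.succ⟩ := by
  by_cases h0 : (i' : ℕ) = 0
  · rw [gmap, dif_pos h0]
    simp only [Sigma.ext_iff, heq_eq_eq]  -- careful: types differ unless j'=j
    constructor
    · intro hv; exact absurd hv (by simp)
    · rintro ⟨hj, hi⟩
      subst hj
      rw [heq_eq_eq] at hi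
      exfalso
      have := congrArg Fin.val hi
      simp [Fin.val_succ] at this
      omega
  · rw [gmap, dif_neg h0]
    constructor
    · intro hv
      rw [Option.some.injEq, Sigma.ext_iff] at hv
      obtain ⟨hj, hi⟩ := hv
      dsimp only at hj hi
      subst hj
      rw [heq_eq_eq] at hi
      rw [Sigma.ext_iff]
      refine ⟨rfl, heq_of_eq (Fin.ext ?_)⟩
      have := congrArg Fin.val hi
      simp only [Fin.val_succ] at this ⊢
      omega
    · intro hv
      rw [Sigma.ext_iff] at hv
      obtain ⟨hj, hi⟩ := hv
      dsimp only at hj hi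
      subst hj
      rw [heq_eq_eq] at hi
      subst hi
      simp

lemma mapDomain_gmap_some {s : ℕ} {n : Fin s → ℕ} (μ : RVar s n →₀ ℕ)
    (j : Fin s) (i : Fin (n j)) :
    Finsupp.mapDomain (gmap s n) μ (some ⟨j, i⟩) = μ ⟨j, i.succ⟩ := by
  classical
  rw [Finsupp.mapDomain, Finsupp.sum_apply]
  rw [Finsupp.sum_fintype _ _ (by intro v; simp)]
  have : ∀ v : RVar s n, (Finsupp.single (gmap s n v) (μ v)) (some ⟨j, i⟩)
      = if v = ⟨j, i.succ⟩ then μ v else 0 := by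
    intro v
    rw [Finsupp.single_apply]
    obtain ⟨j', i'⟩ := v
    by_cases hv : gmap s n ⟨j', i'⟩ = some ⟨j, i⟩
    · rw [if_pos hv, if_pos ((gmap_some j' i' j i).mp hv)]
    · rw [if_neg hv, if_neg (fun hh => hv ((gmap_some j' i' j i).mpr hh))]
  simp only [this]
  rw [Fintype.sum_ite_eq' (⟨j, i.succ⟩ : RVar s n) (fun v => μ v)]

/-- `u` maps distinct monomials of multidegree `𝐝` to distinct monomials:
if the monomials `x^μ` and `x^μ'` of `R` are multihomogeneous of multidegree `d` and have
the same image under `u`, then they are equal. -/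
theorem stmt1 (K : Type*) [Field K] (s : ℕ) (hs : 0 < s) (n : Fin s → ℕ) (hn : ∀ j, 0 < n j)
    (d : Fin s → ℕ) (μ μ' : RVar s n →₀ ℕ)
    (hμ : ∀ j : Fin s, ∑ i : Fin (n j + 1), μ ⟨j, i⟩ = d j)
    (hμ' : ∀ j : Fin s, ∑ i : Fin (n j + 1), μ' ⟨j, i⟩ = d j)
    (h : subst K s n (monomial μ 1) = subst K s n (monomial μ' 1)) :
    (monomial μ (1 : K)) = monomial μ' 1 := by
  rw [subst_eq_rename, rename_monomial, rename_monomial] at h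
  have hmap : Finsupp.mapDomain (gmap s n) μ = Finsupp.mapDomain (gmap s n) μ' :=
    monomial_left_injective (one_ne_zero (α := K)) h
  have key : ∀ (j : Fin s) (i : Fin (n j)), μ ⟨j, i.succ⟩ = μ' ⟨j, i.succ⟩ := by
    intro j i
    rw [← mapDomain_gmap_some μ j i, ← mapDomain_gmap_some μ' j i, hmap]
  have hzero : ∀ j : Fin s, μ ⟨j, 0⟩ = μ' ⟨j, 0⟩ := by
    intro j
    have h1 := hμ j
    have h2 := hμ' j
    rw [Fin.sum_univ_succ] at h1 h2
    have : ∑ i : Fin (n j), μ ⟨j, i.succ⟩ = ∑ i : Fin (n j), μ' ⟨j, i.succ⟩ :=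
      Finset.sum_congr rfl (fun i _ => key j i)
    omega
  have hμμ : μ = μ' := by
    apply Finsupp.ext
    rintro ⟨j, iv, hi⟩
    cases iv with
    | zero => exact hzero j
    | succ k => exact key j ⟨k, by omega⟩
  rw [hμμ]
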